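/- Let k be a commutative ring, H a k-bialgebra, A a k-algebra, and ρ : A → A⊗H a k-linear map making A a right lax H-comodule algebra (conditions (2.1.1), (2.2.1), (2.2.2), (2.5.1)). Then the Koppinen smash product on the k-module Hom_k(H,A), defined by (f # g)(h) = f(h_{(2)})_{[0]} · g(h_{(1)} · f(h_{(2)})_{[1]}) for f,g ∈ Hom_k(H,A) and h ∈ H, is an associative k-bilinear multiplication. -/
import Mathlib
set_option maxHeartbeats 1000000
set_option synthInstance.maxHeartbeats 200000


open TensorProduct

/-- The map `A ⊗ H → (A ⊗ H) ⊗ H`, `a ⊗ h ↦ (a ⊗ h⁽¹⁾) ⊗ h⁽²⁾`. -/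
noncomputable def coassocMap (k A H : Type*) [CommRing k] [Ring A] [Algebra k A]
    [Ring H] [Bialgebra k H] :
    A ⊗[k] H →ₗ[k] (A ⊗[k] H) ⊗[k] H :=
  (TensorProduct.assoc k A H H).symm.toLinearMap ∘ₗ
    LinearMap.lTensor A (Coalgebra.comul (R := k) (A := H))

/-- The map `ε' : A ⊗ H → A`, `a ⊗ h ↦ ε(h) a`. -/
noncomputable def counitMap (k A H : Type*) [CommRing k] [Ring A] [Algebra k A]
    [Ring H] [Bialgebra k H] :
    A ⊗[k] H →ₗ[k] A :=
  (TensorProduct.rid k A).toLinearMap ∘ₗ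
    LinearMap.lTensor A (Coalgebra.counit (R := k) (A := H))

/-- The Koppinen smash product `(f # g)(h) = Σ f(h⁽²⁾)₍₀₎ g(h⁽¹⁾ f(h⁽²⁾)₍₁₎)` on
`Hom_k(H, A)`, for a coaction `ρ : A → A ⊗ H` (Sweedler notation `ρ(a) = a₍₀₎ ⊗ a₍₁₎`). -/
noncomputable def kopSmash (k A H : Type*) [CommRing k] [Ring A] [Algebra k A]
    [Ring H] [Bialgebra k H] (ρ : A →ₗ[k] A ⊗[k] H) (f g : H →ₗ[k] A) : H →ₗ[k] A :=
  LinearMap.mul' k A ∘ₗ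
    LinearMap.lTensor A g ∘ₗ
    LinearMap.lTensor A (LinearMap.mul' k H) ∘ₗ
    (TensorProduct.assoc k A H H).toLinearMap ∘ₗ
    LinearMap.rTensor H (TensorProduct.comm k H A).toLinearMap ∘ₗ
    (TensorProduct.assoc k H A H).symm.toLinearMap ∘ₗ
    LinearMap.lTensor H (ρ ∘ₗ f) ∘ₗ
    Coalgebra.comul (R := k)

section KopAux

variable {k A H : Type*} [CommRing k] [Ring A] [Algebra k A] [Ring H] [Bialgebra k H]

/-- `x ⊗ (a ⊗ m) ↦ a ⊗ (x * m)`. -/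
noncomputable def kopTw (k A H : Type*) [CommRing k] [Ring A] [Algebra k A]
    [Ring H] [Bialgebra k H] : H ⊗[k] (A ⊗[k] H) →ₗ[k] A ⊗[k] H :=
  LinearMap.lTensor A (LinearMap.mul' k H) ∘ₗ
    (TensorProduct.assoc k A H H).toLinearMap ∘ₗ
    LinearMap.rTensor H (TensorProduct.comm k H A).toLinearMap ∘ₗ
    (TensorProduct.assoc k H A H).symm.toLinearMap

@[simp] lemma kopTw_tmul (x : H) (a : A) (m : H) :
    kopTw k A H (x ⊗ₜ[k] (a ⊗ₜ[k] m)) = a ⊗ₜ[k] (x * m) := by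
  simp [kopTw, LinearMap.mul'_apply]

/-- `a ⊗ m ↦ a * g m`. -/
noncomputable def kopMu (g : H →ₗ[k] A) : A ⊗[k] H →ₗ[k] A :=
  LinearMap.mul' k A ∘ₗ LinearMap.lTensor A g

@[simp] lemma kopMu_tmul (g : H →ₗ[k] A) (a : A) (m : H) :
    kopMu g (a ⊗ₜ[k] m) = a * g m := by
  simp [kopMu, LinearMap.mul'_apply]

lemma kopSmash_eq (ρ : A →ₗ[k] A ⊗[k] H) (f g : H →ₗ[k] A) :
    kopSmash k A H ρ f g =
      kopMu g ∘ₗ kopTw k A H ∘ₗ LinearMap.lTensor H (ρ ∘ₗ f) ∘ₗ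
        Coalgebra.comul (R := k) := rfl

lemma kopSmash_apply (ρ : A →ₗ[k] A ⊗[k] H) (f g : H →ₗ[k] A) (h : H) :
    kopSmash k A H ρ f g h =
      kopMu g (kopTw k A H (LinearMap.lTensor H (ρ ∘ₗ f)
        (Coalgebra.comul (R := k) h))) := rfl

variable (ρ : A →ₗ[k] A ⊗[k] H)
  (h211 : ∀ a b : A, ρ (a * b) = ρ a * ρ b)
  (h221 : ∀ a : A, ρ.rTensor H (ρ a) = coassocMap k A H (ρ a) * (ρ 1 ⊗ₜ[k] (1 : H)))

/-- auxiliary: `ρ ∘ g ∘ (u * ·)`. -/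
noncomputable def kopW (g : H →ₗ[k] A) (u : H) : H →ₗ[k] A ⊗[k] H :=
  ρ ∘ₗ g ∘ₗ LinearMap.mulLeft k u

include h211 in
lemma kopL1 (g : H →ₗ[k] A) (u : H) (t : A ⊗[k] H) :
    ρ (kopMu g (kopTw k A H (u ⊗ₜ[k] t))) =
      LinearMap.mul' k (A ⊗[k] H) (TensorProduct.map ρ (kopW ρ g u) t) := by
  induction t using TensorProduct.induction_on with
  | zero => simp
  | tmul a m =>
    simp [kopW, LinearMap.mul'_apply, h211]
  | add x y hx hy =>
    simp only [tmul_add, map_add, hx, hy]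

lemma kopL2 (X : H →ₗ[k] A ⊗[k] H) (z : A ⊗[k] H) (Y : (A ⊗[k] H) ⊗[k] H) :
    LinearMap.mul' k (A ⊗[k] H)
        (LinearMap.lTensor (A ⊗[k] H) X (Y * (z ⊗ₜ[k] (1 : H)))) =
      LinearMap.mul' k (A ⊗[k] H)
        (LinearMap.lTensor (A ⊗[k] H) (LinearMap.mulLeft k z ∘ₗ X) Y) := by
  induction Y using TensorProduct.induction_on with
  | zero => simp
  | tmul s m =>
    simp [Algebra.TensorProduct.tmul_mul_tmul, LinearMap.mul'_apply, mul_assoc]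
  | add x y hx hy =>
    simp only [add_mul, map_add, hx, hy]

include h211 in
lemma kopL3 (g : H →ₗ[k] A) (u : H) :
    LinearMap.mulLeft k (ρ 1) ∘ₗ kopW ρ g u = kopW ρ g u := by
  ext x
  simp only [kopW, LinearMap.comp_apply, LinearMap.mulLeft_apply, ← h211, one_mul]

lemma kopL4 (e : H →ₗ[k] A) (v₁ d₁ : H) (c : A) (G : A ⊗[k] H) :
    kopMu e (kopTw k A H (v₁ ⊗ₜ[k] ((c ⊗ₜ[k] d₁) * G))) =
      c * kopMu e (kopTw k A H ((v₁ * d₁) ⊗ₜ[k] G)) := by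
  induction G using TensorProduct.induction_on with
  | zero => simp
  | tmul p q =>
    simp [Algebra.TensorProduct.tmul_mul_tmul, mul_assoc]
  | add x y hx hy =>
    simp only [mul_add, tmul_add, map_add, hx, hy]

lemma kopClaim3 (g e : H →ₗ[k] A) (v₁ v₂ : H) (Y : (A ⊗[k] H) ⊗[k] H) :
    kopMu e (kopTw k A H (v₁ ⊗ₜ[k]
        (LinearMap.mul' k (A ⊗[k] H) (LinearMap.lTensor (A ⊗[k] H) (kopW ρ g v₂) Y)))) =
      (LinearMap.mul' k A ∘ₗ LinearMap.lTensor A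
          (kopMu e ∘ₗ kopTw k A H ∘ₗ LinearMap.lTensor H (ρ ∘ₗ g) ∘ₗ
            LinearMap.mulLeft k (v₁ ⊗ₜ[k] v₂)))
        ((TensorProduct.assoc k A H H) Y) := by
  induction Y using TensorProduct.induction_on with
  | zero => simp
  | tmul s d₂ =>
    induction s using TensorProduct.induction_on with
    | zero => simp
    | tmul c d₁ =>
      simp only [LinearMap.lTensor_tmul, LinearMap.mul'_apply, assoc_tmul,
        LinearMap.comp_apply, LinearMap.mulLeft_apply,
        Algebra.TensorProduct.tmul_mul_tmul]
      rw [kopL4 e v₁ d₁ c]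
      simp [kopW, LinearMap.mul'_apply]
    | add x y hx hy =>
      simp only [add_tmul, tmul_add, map_add, hx, hy, LinearMap.comp_apply]
  | add x y hx hy =>
    simp only [add_tmul, tmul_add, map_add, hx, hy, LinearMap.comp_apply]

/-- `v₂ ↦ ρ (kopMu g (kopTw (v₂ ⊗ ρ a)))`. -/
noncomputable def kopPa (g : H →ₗ[k] A) (a : A) : H →ₗ[k] A ⊗[k] H :=
  ρ ∘ₗ kopMu g ∘ₗ kopTw k A H ∘ₗ (TensorProduct.mk k H (A ⊗[k] H)).flip (ρ a)

@[simp] lemma kopPa_apply (g : H →ₗ[k] A) (a : A) (v₂ : H) :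
    kopPa ρ g a v₂ = ρ (kopMu g (kopTw k A H (v₂ ⊗ₜ[k] ρ a))) := rfl

lemma mulLeft_tp_add (s s' : H ⊗[k] H) :
    LinearMap.mulLeft k (s + s') = LinearMap.mulLeft k s + LinearMap.mulLeft k s' := by
  ext x; simp [add_mul]

include h211 h221 in
lemma kopClaim2 (g e : H →ₗ[k] A) (s : H ⊗[k] H) (a : A) :
    kopMu e (kopTw k A H (LinearMap.lTensor H (kopPa ρ g a) s)) =
      (LinearMap.mul' k A) ((LinearMap.lTensor A
          (kopMu e ∘ₗ kopTw k A H ∘ₗ LinearMap.lTensor H (ρ ∘ₗ g) ∘ₗ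
            LinearMap.mulLeft k s ∘ₗ Coalgebra.comul (R := k))) (ρ a)) := by
  induction s using TensorProduct.induction_on with
  | zero =>
    rw [LinearMap.mulLeft_zero_eq_zero]
    simp
  | tmul v₁ v₂ =>
    -- main computation at a pure tensor
    rw [LinearMap.lTensor_tmul, kopPa_apply, kopL1 ρ h211 g v₂ (ρ a),
      ← LinearMap.lTensor_comp_rTensor A ρ (kopW ρ g v₂),
      LinearMap.comp_apply, h221 a, kopL2, kopL3 ρ h211, kopClaim3 ρ g e]
    have e3 : (TensorProduct.assoc k A H H) (coassocMap k A H (ρ a)) =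
        LinearMap.lTensor A (Coalgebra.comul (R := k)) (ρ a) := by
      simp [coassocMap]
    rw [e3, LinearMap.comp_apply, ← LinearMap.comp_apply (LinearMap.lTensor A _),
      ← LinearMap.lTensor_comp]
    rfl
  | add x y hx hy =>
    rw [mulLeft_tp_add]
    simp only [map_add, LinearMap.comp_add, LinearMap.add_comp, LinearMap.lTensor_add,
      LinearMap.add_apply, hx, hy]

lemma kopSwap (f g : H →ₗ[k] A) (w : H) (s : H ⊗[k] H) :
    LinearMap.lTensor H (ρ ∘ₗ kopMu g ∘ₗ kopTw k A H ∘ₗ LinearMap.lTensor H (ρ ∘ₗ f))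
        ((TensorProduct.assoc k H H H) (s ⊗ₜ[k] w)) =
      LinearMap.lTensor H (kopPa ρ g (f w)) s := by
  induction s using TensorProduct.induction_on with
  | zero => simp
  | tmul v₁ v₂ => simp
  | add x y hx hy => simp only [add_tmul, map_add, hx, hy]

lemma kopFin (g e : H →ₗ[k] A) (v : H) (t : A ⊗[k] H) :
    kopMu (kopSmash k A H ρ g e) (kopTw k A H (v ⊗ₜ[k] t)) =
      (LinearMap.mul' k A) ((LinearMap.lTensor A
          (kopMu e ∘ₗ kopTw k A H ∘ₗ LinearMap.lTensor H (ρ ∘ₗ g) ∘ₗ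
            LinearMap.mulLeft k (Coalgebra.comul (R := k) v) ∘ₗ Coalgebra.comul (R := k))) t) := by
  induction t using TensorProduct.induction_on with
  | zero => simp
  | tmul c d =>
    simp only [kopTw_tmul, kopMu_tmul, LinearMap.lTensor_tmul, LinearMap.mul'_apply,
      LinearMap.comp_apply, LinearMap.mulLeft_apply, kopSmash_apply]
    rw [Bialgebra.comul_mul]
  | add x y hx hy =>
    simp only [tmul_add, map_add, hx, hy]

end KopAux

/-- for a right lax `H`-comodule algebra `A`, the Koppinen smash product
`(f # g)(h) = f(h⁽²⁾)₍₀₎ g(h⁽¹⁾ f(h⁽²⁾)₍₁₎)` on `Hom_k(H, A)` is a `k`-bilinear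
associative multiplication. -/
theorem koppinen_smash_associative (k A H : Type*) [CommRing k] [Ring A] [Algebra k A]
    [Ring H] [Bialgebra k H] (ρ : A →ₗ[k] A ⊗[k] H)
    (h211 : ∀ a b : A, ρ (a * b) = ρ a * ρ b)
    (h221 : ∀ a : A, ρ.rTensor H (ρ a) = coassocMap k A H (ρ a) * (ρ 1 ⊗ₜ[k] (1 : H)))
    (h222 : ∀ a : A, counitMap k A H (ρ a) = counitMap k A H (ρ 1) * a)
    (h251 : ρ 1 = (counitMap k A H).rTensor H (ρ.rTensor H (ρ 1))) :
    (∀ f f' g : H →ₗ[k] A,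
      kopSmash k A H ρ (f + f') g = kopSmash k A H ρ f g + kopSmash k A H ρ f' g) ∧
    (∀ f g g' : H →ₗ[k] A,
      kopSmash k A H ρ f (g + g') = kopSmash k A H ρ f g + kopSmash k A H ρ f g') ∧
    (∀ (c : k) (f g : H →ₗ[k] A),
      kopSmash k A H ρ (c • f) g = c • kopSmash k A H ρ f g) ∧
    (∀ (c : k) (f g : H →ₗ[k] A),
      kopSmash k A H ρ f (c • g) = c • kopSmash k A H ρ f g) ∧
    (∀ f g e : H →ₗ[k] A,
      kopSmash k A H ρ (kopSmash k A H ρ f g) e = kopSmash k A H ρ f (kopSmash k A H ρ g e)) := by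
  refine ⟨?_, ?_, ?_, ?_, ?_⟩
  · intro f f' g
    ext h
    simp [kopSmash, LinearMap.comp_add, LinearMap.lTensor_add]
  · intro f g g'
    ext h
    simp [kopSmash, LinearMap.lTensor_add]
  · intro c f g
    ext h
    simp [kopSmash, LinearMap.comp_smul, LinearMap.lTensor_smul]
  · intro c f g
    ext h
    simp [kopSmash, LinearMap.lTensor_smul]
  · intro f g e
    ext h
    rw [kopSmash_apply, kopSmash_apply]
    have step1 :
        LinearMap.lTensor H (ρ ∘ₗ kopSmash k A H ρ f g) =
          LinearMap.lTensor H (ρ ∘ₗ kopMu g ∘ₗ kopTw k A H ∘ₗ LinearMap.lTensor H (ρ ∘ₗ f)) ∘ₗ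
            LinearMap.lTensor H (Coalgebra.comul (R := k)) := by
      rw [← LinearMap.lTensor_comp]
      rfl
    rw [step1, LinearMap.comp_apply, ← Coalgebra.coassoc_apply]
    -- now both sides are functions of `z = comul h`
    generalize (Coalgebra.comul (R := k) h : H ⊗[k] H) = z
    induction z using TensorProduct.induction_on with
    | zero => simp
    | tmul v w =>
      rw [LinearMap.rTensor_tmul, kopSwap, kopClaim2 ρ h211 h221, LinearMap.lTensor_tmul,
        LinearMap.comp_apply, kopFin]
    | add x y hx hy =>
      simp only [map_add, hx, hy]
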